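/- For any rational number r = [m₁,…,m_k] with 0 < r ≤ 1, the cyclic S-sequence CS(r) decomposes as ⟨⟨ S₁, S₂, S₁, S₂ ⟩⟩ where each Sᵢ is a palindromic (symmetric) finite sequence, each Sᵢ occurs exactly twice in CS(r), S₁ begins and ends with m₁+1, and S₂ begins and ends with m₁ (with S₁ empty when k = 1). -/

import Mathlib

/-- A letter in the free group on two generators `a = 0`, `b = 1`:
the generator together with the exponent sign (`true` = exponent `+1`). -/
abbrev Letter := Fin 2 × Bool

/-- A word in the generators `a±1, b±1`. -/
abbrev Word := List Letter

/-- Continued fraction `[m₁,…,m_k] = 1/(m₁ + 1/(m₂ + ⋯ + 1/m_k))`. -/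
def cf : List ℕ → ℚ
  | [] => 0
  | m :: rest => 1 / (m + cf rest)

/-- `ε_i = (-1)^⌊iq/p⌋`. -/
def eps (p q i : ℕ) : ℤ := (-1) ^ (i * q / p)

/-- The word `û_{q/p} = b^{ε₁} a^{ε₂} b^{ε₃} ⋯` (of length `p-1`) as a list of letters. -/
def hatList (p q : ℕ) : Word :=
  (List.range (p - 1)).map (fun j =>
    ((if (j + 1) % 2 = 1 then (1 : Fin 2) else 0), decide ((((j + 1) * q) / p) % 2 = 0)))

/-- The formal inverse of a word. -/
def invWord (w : Word) : Word := (w.map (fun x => (x.1, !x.2))).reverse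

/-- The 2-bridge relator word `u_{q/p}`: `a·û·b^{(-1)^q}·û⁻¹` for `p` odd, and
`a·û·a⁻¹·û⁻¹` for `p` even. -/
def uList (p q : ℕ) : Word :=
  ((0 : Fin 2), true) :: (hatList p q ++
    (if p % 2 = 1 then [((1 : Fin 2), decide (q % 2 = 0))] else [((0 : Fin 2), false)]) ++
    invWord (hatList p q))

/-- The relator word `u_r` of slope `r = q/p` (in lowest terms). -/
def slopeWord (r : ℚ) : Word := uList r.den r.num.toNat

/-- The slopes `r_0 = [4,3,3]`, `r_i = [4,2,(i-1)⟨3⟩,4,3]` for `i ≥ 1`. -/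
def rSlope : ℕ → ℚ
  | 0 => cf [4, 3, 3]
  | i + 1 => cf ([4, 2] ++ List.replicate i 3 ++ [4, 3])

/-- Run-lengths of a list of signs (auxiliary). -/
def runsAux : Bool → ℕ → List Bool → List ℕ
  | _, n, [] => [n]
  | s, n, x :: xs => if x = s then runsAux s (n + 1) xs else n :: runsAux x 1 xs

/-- The S-sequence of a word: the lengths of its maximal positive/negative blocks. -/
def Sseq (w : Word) : List ℕ :=
  match w.map Prod.snd with
  | [] => []
  | s :: xs => runsAux s 1 xs

/-- A word is reduced: no adjacent mutually inverse letters. -/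
def Reduced (w : Word) : Prop :=
  List.Chain' (fun u v => ¬(u.1 = v.1 ∧ u.2 ≠ v.2)) w

/-- A word is alternating: adjacent letters use different generators. -/
def Alternating (w : Word) : Prop := List.Chain' (fun u v => u.1 ≠ v.1) w

/-- Cyclically reduced: reduced including the wrap-around pair. -/
def CyclicallyReduced (w : Word) : Prop :=
  List.Chain' (fun u v => ¬(u.1 = v.1 ∧ u.2 ≠ v.2)) (w ++ w)

/-- Cyclically alternating: alternating including the wrap-around pair. -/
def CyclicallyAlternating (w : Word) : Prop :=
  List.Chain' (fun u v => u.1 ≠ v.1) (w ++ w)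

/-- The word starts at a block boundary of the cyclic word: either all signs agree,
or the first and last signs differ. -/
def StartsAtBoundary (w : Word) : Prop :=
  (∀ x ∈ w, ∀ y ∈ w, x.2 = y.2) ∨ (∀ x ∈ w.head?, ∀ y ∈ w.getLast?, x.2 ≠ y.2)

/-- `L` is a linear representative of the cyclic S-sequence `CS(w)`:
the S-sequence of some rotation of `w` starting at a block boundary. -/
def IsCSRep (w : Word) (L : List ℕ) : Prop :=
  ∃ n, StartsAtBoundary (w.rotate n) ∧ Sseq (w.rotate n) = L

/-- From a linear representative `L = (m+1, t₁⟨m⟩, m+1, t₂⟨m⟩, …)` of a CS-sequence,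
extract the CT-sequence `(t₁, t₂, …)` of run-lengths of `m`'s. -/
def ctOf (m : ℕ) (L : List ℕ) : List ℕ := ((L.splitOn (m + 1)).drop 1).map List.length

/-- The cyclic sequence represented by `L` contains `pat` as a contiguous subsequence. -/
def CyclicContains (L pat : List ℕ) : Prop := ∃ k, pat.isPrefixOf (L.rotate k)

/-- The number of (cyclic) occurrences of `pat` as a contiguous subsequence of
the cyclic sequence represented by `L`. -/
def cyclicCount (pat L : List ℕ) : ℕ :=
  ((List.range L.length).filter (fun k => pat.isPrefixOf (L.rotate k))).length

/-- `⟨⟨S₁, S₂, S₁, S₂⟩⟩` is the symmetric decomposition of the cyclic S-sequence of `w`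
(for a slope whose continued fraction starts with `m`): each `Sᵢ` is a palindrome,
`S₁` begins and ends with `m+1`, and `S₂` begins and ends with `m`. -/
def IsSymmDecomp (w : Word) (m : ℕ) (S1 S2 : List ℕ) : Prop :=
  IsCSRep w (S1 ++ S2 ++ S1 ++ S2) ∧ S1.reverse = S1 ∧ S2.reverse = S2 ∧
  (∀ x ∈ S1.head?, x = m + 1) ∧ (∀ x ∈ S1.getLast?, x = m + 1) ∧
  S2.head? = some m ∧ S2.getLast? = some m

/-- Expand a sequence of block lengths into the corresponding list of signs,
blocks alternating in sign starting with `s`. -/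
def signList : Bool → List ℕ → List Bool
  | _, [] => []
  | s, n :: rest => List.replicate n s ++ signList (!s) rest

open Fin.NatCast in
/-- The alternating word with initial generator `g0`, initial sign `s0`,
and S-sequence `S`. -/
def altWord (g0 : Fin 2) (s0 : Bool) (S : List ℕ) : Word :=
  (List.range (signList s0 S).length).zipWith (fun k s => ((g0 + (k : Fin 2)), s))
    (signList s0 S)

/-- The product `w * w'` is freely reduced without cancellation at the junction. -/
def NoCancel (w w' : Word) : Prop :=
  ∀ x ∈ w.getLast?, ∀ y ∈ w'.head?, ¬(x.1 = y.1 ∧ x.2 ≠ y.2)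

/-- The word `X`: alternating, starting with `a`, with S-sequence `(4,4,4,5,4,4)`
(it ends with `a⁻¹`). -/
def Xword : Word := altWord 0 true [4, 4, 4, 5, 4, 4]

/-- The endomorphism of `F(a,b)` with `a ↦ X⁻¹`, `b ↦ b⁻¹`. -/
def fmap : FreeGroup (Fin 2) →* FreeGroup (Fin 2) :=
  FreeGroup.lift (fun i => if i = 0 then (FreeGroup.mk Xword)⁻¹ else (FreeGroup.of 1)⁻¹)

/-- The set of relators `{u_{r_i} : i ≥ 0}`. -/
def relsG : Set (FreeGroup (Fin 2)) := {x | ∃ i, x = FreeGroup.mk (slopeWord (rSlope i))}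

/-- The symmetrized set generated by the relators `u_{r_i}`: all cyclic permutations
of the `u_{r_i}` and of their inverses. -/
def Rset : Set Word :=
  {w | ∃ i n, w = (slopeWord (rSlope i)).rotate n ∨
      w = (invWord (slopeWord (rSlope i))).rotate n}

/-
Write `r = q/p` in lowest terms and `p = m₁ q + s` with `0 ≤ s < q` (`s = 0` exactly when
`k = 1`). The `i`-th letter of `u_r` has sign `(-1)^⌊iq/p⌋`, so the `v`-th block of `CS(r)` has
length `⌈(v+1)p/q⌉ - ⌈vp/q⌉ = m₁ + c(v)` with `c(v) = ⌈(v+1)s/q⌉ - ⌈vs/q⌉ ∈ {0, 1}`,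
which depends only on `v mod q`. With `b = s⁻¹ mod q`, take `S₁ = (m₁ + c(v))_{v < b}` and
`S₂ = (m₁ + c(v))_{b ≤ v < q}`; then `CS(r) = S₁ S₂ S₁ S₂`.
Since `c(x) = c(y)` whenever `(x + y + 1)s ≡ 1 (mod q)`, both are palindromes, and `c(0) = 1`,
`c(b) = 0` give their end terms. The sum of `c` over a window of length `n` starting at `k` is
`⌈(k+n)s/q⌉ - ⌈ks/q⌉`; for `n = b` (resp. `n = q - b`) it takes its value at `k = 0`
(resp. `k = b`) only when `ks ≡ 0` (resp. `ks ≡ 1`) mod `q`, so each `Sᵢ` occurs only at the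
two obvious places.
-/

section CeilDiv

variable {q a b r z c : ℕ}

lemma Nat.mul_add_ceilDiv (hq : 0 < q) (n k : ℕ) : (q * n + k) ⌈/⌉ q = n + k ⌈/⌉ q := by
  simp only [Nat.ceilDiv_eq_add_pred_div]
  rw [show q * n + k + q - 1 = q * n + (k + q - 1) by omega, Nat.mul_add_div hq]

lemma Nat.ceilDiv_eq_one (hr : 0 < r) (hrq : r ≤ q) : r ⌈/⌉ q = 1 := by
  rw [Nat.ceilDiv_eq_add_pred_div, Nat.div_eq_iff (by omega)]
  omega

lemma Nat.ceilDiv_mono_left (h : a ≤ b) : a ⌈/⌉ q ≤ b ⌈/⌉ q := by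
  simp only [Nat.ceilDiv_eq_add_pred_div]
  exact Nat.div_le_div_right (by omega)

lemma Nat.add_ceilDiv_sub_ceilDiv_mod (hq : 0 < q) (a c : ℕ) :
    (a + c) ⌈/⌉ q - a ⌈/⌉ q = (a % q + c) ⌈/⌉ q - (a % q) ⌈/⌉ q := by
  conv_lhs => rw [← Nat.div_add_mod a q, add_assoc, Nat.mul_add_ceilDiv hq,
    Nat.mul_add_ceilDiv hq]
  omega

lemma Nat.add_ceilDiv_sub_ceilDiv_of_lt (hz : z < q) (hc : c ≤ q) :
    (z + c) ⌈/⌉ q - z ⌈/⌉ q = if (z = 0 ∧ 0 < c) ∨ q < z + c then 1 else 0 := by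
  have hq : 0 < q := by omega
  rcases Nat.eq_zero_or_pos z with rfl | hz0
  · rcases Nat.eq_zero_or_pos c with rfl | hc0
    · simp
    · simp [Nat.ceilDiv_eq_one hc0 hc, hc0]
  rw [Nat.ceilDiv_eq_one hz0 hz.le]
  by_cases hzc : q < z + c
  · rw [show z + c = q * 1 + (z + c - q) by omega, Nat.mul_add_ceilDiv hq,
      Nat.ceilDiv_eq_one (by omega) (by omega)]
    simp [hzc]
  · rw [Nat.ceilDiv_eq_one (by omega) (by omega)]
    simp only [hzc, or_false, if_neg (by omega : ¬(z = 0 ∧ 0 < c))]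

lemma Nat.mul_sub_div_add_div {p a c : ℕ} (hp : 0 < p) (ha : ¬p ∣ a) (hac : a < c * p) :
    (c * p - a) / p + a / p = c - 1 := by
  obtain ⟨d, hd⟩ := Nat.exists_eq_add_of_lt ((Nat.div_lt_iff_lt_mul hp).mpr hac)
  have hR : 0 < a % p := Nat.pos_of_ne_zero fun h => ha (Nat.dvd_of_mod_eq_zero h)
  have hsplit : c * p - a = p * d + (p - a % p) := by
    have hdiv := Nat.div_add_mod a p
    have : c * p = p * (a / p) + p * d + p := by rw [hd]; ring
    have := Nat.mod_lt a hp
    rw [Nat.sub_eq_iff_eq_add hac.le]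
    omega
  rw [hsplit, Nat.mul_add_div hp, Nat.div_eq_of_lt (Nat.sub_lt hp hR), hd, add_zero,
    Nat.add_sub_cancel, add_comm]

end CeilDiv

def ceilIncr (q s v : ℕ) : ℕ := (v + 1) * s ⌈/⌉ q - v * s ⌈/⌉ q

section CeilIncr

variable {q s : ℕ}

lemma ceilIncr_eq_mod (hq : 0 < q) (v : ℕ) :
    ceilIncr q s v = (v * s % q + s) ⌈/⌉ q - (v * s % q) ⌈/⌉ q := by
  rw [ceilIncr, add_mul, one_mul, Nat.add_ceilDiv_sub_ceilDiv_mod hq]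

lemma ceilIncr_eq (hq : 0 < q) (hsq : s ≤ q) (v : ℕ) :
    ceilIncr q s v = if (v * s % q = 0 ∧ 0 < s) ∨ q < v * s % q + s then 1 else 0 := by
  rw [ceilIncr_eq_mod hq, Nat.add_ceilDiv_sub_ceilDiv_of_lt (Nat.mod_lt _ hq) hsq]

lemma ceilIncr_mod (hq : 0 < q) (v : ℕ) : ceilIncr q s (v % q) = ceilIncr q s v := by
  rw [ceilIncr_eq_mod hq, ceilIncr_eq_mod hq, Nat.mod_mul_mod]

lemma sum_ceilIncr (k n : ℕ) :
    ∑ u ∈ Finset.range n, ceilIncr q s (k + u) = (k + n) * s ⌈/⌉ q - k * s ⌈/⌉ q := by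
  have hmono : Monotone fun u => (k + u) * s ⌈/⌉ q := fun u v huv =>
    Nat.ceilDiv_mono_left (Nat.mul_le_mul_right s (by omega))
  simpa [ceilIncr, add_assoc] using Finset.sum_range_tsub hmono n

lemma ceilIncr_eq_of_modEq (hq : 0 < q) (hsq : s ≤ q) {x y : ℕ}
    (h : (x + y + 1) * s ≡ 1 [MOD q]) : ceilIncr q s x = ceilIncr q s y := by
  rw [ceilIncr_eq hq hsq, ceilIncr_eq hq hsq]
  have hx := Nat.mod_lt (x * s) hq
  have hy := Nat.mod_lt (y * s) hq
  have hsum : x * s % q + y * s % q + s ≡ 1 [MOD q] := by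
    refine Nat.ModEq.trans ?_ h
    rw [add_mul, add_mul, one_mul]
    exact ((Nat.mod_modEq _ q).add (Nat.mod_modEq _ q)).add_right s
  rcases Nat.lt_or_ge q 2 with hq1 | hq2
  · have : q = 1 := by omega
    subst this
    simp only [Nat.mod_one]
  have hdecomp := Nat.div_add_mod (x * s % q + y * s % q + s) q
  rw [hsum, Nat.mod_eq_of_lt hq2] at hdecomp
  have ht : (x * s % q + y * s % q + s) / q < 3 := by
    rw [Nat.div_lt_iff_lt_mul hq]; omega
  generalize (x * s % q + y * s % q + s) / q = t at hdecomp ht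
  interval_cases t <;> split_ifs <;> omega

lemma sum_ceilIncr_eq (hq : 0 < q) (k n : ℕ) :
    ∑ u ∈ Finset.range n, ceilIncr q s (k + u) =
      n * s / q +
        if (k * s % q = 0 ∧ 0 < n * s % q) ∨ q < k * s % q + n * s % q then 1 else 0 := by
  have hz := Nat.mod_lt (k * s) hq
  have hc := Nat.mod_lt (n * s) hq
  have hsplit : (k * s % q + n * s) ⌈/⌉ q = n * s / q + (k * s % q + n * s % q) ⌈/⌉ q := by
    conv_lhs => rw [← Nat.div_add_mod (n * s) q, add_left_comm]
    exact Nat.mul_add_ceilDiv hq _ _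
  rw [sum_ceilIncr, add_mul, Nat.add_ceilDiv_sub_ceilDiv_mod hq, hsplit,
    Nat.add_sub_assoc (Nat.ceilDiv_mono_left (Nat.le_add_right _ _)),
    Nat.add_ceilDiv_sub_ceilDiv_of_lt hz hc.le]

lemma modEq_zero_of_forall_ceilIncr_add_eq (hq : 0 < q) (hco : Nat.Coprime q s) {b k : ℕ}
    (hb : b * s ≡ 1 [MOD q]) (h : ∀ u < b, ceilIncr q s (k + u) = ceilIncr q s u) :
    k ≡ 0 [MOD q] := by
  rcases Nat.lt_or_ge q 2 with hq1 | hq2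
  · rw [show q = 1 by omega]; exact Nat.modEq_one
  have hsum := sum_ceilIncr_eq (s := s) hq k b
  have hsum0 := sum_ceilIncr_eq (s := s) hq 0 b
  have hbs : b * s % q = 1 := by rw [hb, Nat.mod_eq_of_lt hq2]
  simp only [zero_add, zero_mul, Nat.zero_mod] at hsum0
  rw [Finset.sum_congr rfl fun u hu => h u (Finset.mem_range.mp hu), hsum0] at hsum
  simp only [hbs] at hsum
  have hks : k * s % q = 0 := by
    have := Nat.mod_lt (k * s) hq
    grind
  exact Nat.ModEq.cancel_right_of_coprime (c := s) hco (by simpa [Nat.ModEq] using hks)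

lemma modEq_of_forall_ceilIncr_add_eq (hq : 0 < q) (hco : Nat.Coprime q s) {b k : ℕ}
    (hbq : b < q) (hb : b * s ≡ 1 [MOD q])
    (h : ∀ u < q - b, ceilIncr q s (k + u) = ceilIncr q s (b + u)) : k ≡ b [MOD q] := by
  rcases Nat.lt_or_ge q 2 with hq1 | hq2
  · rw [show q = 1 by omega]; exact Nat.modEq_one
  have hsum := sum_ceilIncr_eq (s := s) hq k (q - b)
  rw [Finset.sum_congr rfl fun u hu => h u (Finset.mem_range.mp hu), sum_ceilIncr_eq hq b]
    at hsum
  have hbs : b * s % q = 1 := by rw [hb, Nat.mod_eq_of_lt hq2]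
  have hcs : (q - b) * s % q = q - 1 := by
    have h0 : ((q - b) * s + b * s) % q = 0 := by
      rw [← add_mul, Nat.sub_add_cancel hbq.le, Nat.mul_mod_right]
    have := Nat.mod_lt ((q - b) * s) hq
    rw [Nat.add_mod, hbs] at h0
    rcases Nat.lt_or_ge ((q - b) * s % q + 1) q with hlt | hge
    · rw [Nat.mod_eq_of_lt hlt] at h0
      omega
    · omega
  have hks : k * s % q = 1 := by
    have := Nat.mod_lt (k * s) hq
    rw [hbs, hcs] at hsum
    grind
  exact Nat.ModEq.cancel_right_of_coprime hco (hks.trans hbs.symm)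

end CeilIncr

section Periodic

variable {α : Type*} {f : ℕ → α} {N : ℕ}

lemma rotate_map_range_of_mod (hf : ∀ x, f (x % N) = f x) (k : ℕ) :
    ((List.range N).map f).rotate k = (List.range' k N).map f := by
  refine List.ext_getElem (by simp) fun i h1 h2 => ?_
  simp only [List.getElem_rotate, List.getElem_map, List.getElem_range, List.getElem_range',
    List.length_map, List.length_range, hf, one_mul, Nat.add_comm i k]

lemma isPrefixOf_map_range'_iff [BEq α] [LawfulBEq α] {a k n : ℕ} (hn : n ≤ N) :
    ((List.range' a n).map f).isPrefixOf ((List.range' k N).map f) ↔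
      ∀ u < n, f (k + u) = f (a + u) := by
  rw [List.isPrefixOf_iff_prefix, List.prefix_iff_eq_take, List.length_map, List.length_range',
    ← List.map_take, List.take_range'_of_length_ge hn]
  constructor
  · intro h u hu
    have := congrArg (·[u]?) h
    simpa [List.getElem?_range', hu] using this.symm
  · intro h
    refine List.ext_getElem (by simp) fun u h1 _ => ?_
    simp only [List.getElem_map, List.getElem_range', one_mul]
    exact (h u (by simpa using h1)).symm

lemma cyclicCount_map_range' {f : ℕ → ℕ} (hf : ∀ x, f (x % N) = f x) {a n : ℕ}
    (hn : n ≤ N) :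
    cyclicCount ((List.range' a n).map f) ((List.range N).map f) =
      Nat.count (fun k => ∀ u < n, f (k + u) = f (a + u)) N := by
  rw [cyclicCount, Nat.count, List.countP_eq_length_filter, List.length_map, List.length_range]
  congr 1
  refine List.filter_congr fun k _ => ?_
  rw [rotate_map_range_of_mod hf, Bool.eq_iff_iff, decide_eq_true_iff]
  exact isPrefixOf_map_range'_iff hn

end Periodic

lemma count_modEq_two_mul {q : ℕ} (hq : 0 < q) (a : ℕ) :
    Nat.count (· ≡ a [MOD q]) (2 * q) = 2 := by
  rw [Nat.count_modEq_card _ hq, Nat.mul_div_cancel _ hq, Nat.mul_mod_left,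
    if_neg (Nat.not_lt_zero _)]

lemma reverse_map_range'_eq_self {α : Type*} {f : ℕ → α} {a n : ℕ}
    (h : ∀ u < n, f (a + u) = f (a + (n - 1 - u))) :
    ((List.range' a n).map f).reverse = (List.range' a n).map f := by
  refine List.ext_getElem (by simp) fun u h1 h2 => ?_
  simp only [List.length_reverse, List.length_map, List.length_range'] at h1
  simp only [List.getElem_reverse, List.getElem_map, List.getElem_range', List.length_map,
    List.length_range', one_mul]
  exact (h u h1).symm

/-- The `v`-th sign block of `u_{q/p}` consists of the positions `i` with `⌊iq/p⌋ = v`,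
that is `blockStart p q v ≤ i < blockStart p q (v + 1)`. -/
def blockStart (p q v : ℕ) : ℕ := v * p ⌈/⌉ q

def blockLen (p q v : ℕ) : ℕ := blockStart p q (v + 1) - blockStart p q v

section Blocks

variable {p q : ℕ}

lemma blockStart_le_iff (hq : 0 < q) {v i : ℕ} : blockStart p q v ≤ i ↔ v * p ≤ q * i :=
  ceilDiv_le_iff_le_mul hq

lemma blockStart_mono : Monotone (blockStart p q) := fun _ _ h =>
  Nat.ceilDiv_mono_left (Nat.mul_le_mul_right p h)

lemma blockStart_zero : blockStart p q 0 = 0 := by simp [blockStart]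

lemma blockStart_two_mul (hq : 0 < q) : blockStart p q (2 * q) = 2 * p := by
  rw [blockStart, show 2 * q * p = q * (2 * p) + 0 by ring, Nat.mul_add_ceilDiv hq]
  simp

lemma div_eq_of_mem_block (hq : 0 < q) {v i : ℕ} (h1 : blockStart p q v ≤ i)
    (h2 : i < blockStart p q (v + 1)) : i * q / p = v := by
  rw [blockStart_le_iff hq] at h1
  rw [lt_iff_not_ge, blockStart_le_iff hq] at h2
  exact Nat.div_eq_of_lt_le (by linarith) (by linarith)

lemma blockLen_eq {m s : ℕ} (hq : 0 < q) (hpe : p = m * q + s) (v : ℕ) :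
    blockLen p q v = m + ceilIncr q s v := by
  have hstart : ∀ w, blockStart p q w = w * m + w * s ⌈/⌉ q := fun w => by
    rw [blockStart, show w * p = q * (w * m) + w * s by rw [hpe]; ring, Nat.mul_add_ceilDiv hq]
  have hmono := Nat.ceilDiv_mono_left (q := q) (Nat.mul_le_mul_right s (Nat.le_add_right v 1))
  rw [blockLen, ceilIncr, hstart, hstart, add_mul, one_mul]
  omega

end Blocks

/-- `epsSign p q i` is `true` exactly when `eps p q i = 1`. -/
def epsSign (p q i : ℕ) : Bool := decide (i * q / p % 2 = 0)

section Signs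

variable {p q : ℕ}

lemma epsSign_two_mul_sub (hp : 0 < p) (hco : Nat.Coprime q p) {i : ℕ} (h1 : 1 ≤ i)
    (h2 : i < p) : epsSign p q (2 * p - i) = !epsSign p q i := by
  have hndvd : ¬p ∣ i * q := fun h =>
    absurd (Nat.le_of_dvd (by omega) ((Nat.Coprime.dvd_mul_right hco.symm).mp h)) (by omega)
  have hq : 0 < q := Nat.pos_of_ne_zero fun h => by
    rw [h, Nat.coprime_zero_left] at hco
    omega
  have hsum := Nat.mul_sub_div_add_div hp hndvd (c := 2 * q) (by nlinarith)
  rw [show 2 * q * p - i * q = (2 * p - i) * q by rw [Nat.sub_mul]; ring_nf] at hsum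
  rcases Nat.mod_two_eq_zero_or_one (i * q / p) with h | h <;> simp [epsSign, h] <;> omega

lemma epsSign_two_mul_sub_one (hq : 0 < q) (hqp : q ≤ p) : epsSign p q (2 * p - 1) = false := by
  have hlast : (2 * p - 1) * q / p = 2 * q - 1 := by
    obtain ⟨p, rfl⟩ := Nat.exists_eq_add_one.mpr (hq.trans_le hqp)
    obtain ⟨q, rfl⟩ := Nat.exists_eq_add_one.mpr hq
    rw [show 2 * (p + 1) - 1 = 2 * p + 1 by omega, show 2 * (q + 1) - 1 = 2 * q + 1 by omega]
    exact Nat.div_eq_of_lt_le (by nlinarith) (by nlinarith)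
  rw [epsSign, hlast, decide_eq_false_iff_not]
  omega

lemma map_snd_uList (hp : 0 < p) (hco : Nat.Coprime q p) :
    (uList p q).map Prod.snd = (List.range (2 * p)).map (epsSign p q) := by
  have hmid : List.map Prod.snd
      (if p % 2 = 1 then [((1 : Fin 2), decide (q % 2 = 0))] else [((0 : Fin 2), false)]) =
      [epsSign p q (1 + (p - 1) + 0)] := by
    rw [show 1 + (p - 1) + 0 = p by omega, epsSign, Nat.mul_div_cancel_left q hp]
    split_ifs with hpar
    · rfl
    · have : q % 2 = 1 := by
        by_contra hq
        have := Nat.dvd_gcd (Nat.dvd_of_mod_eq_zero (Nat.mod_two_ne_one.mp hq))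
          (Nat.dvd_of_mod_eq_zero (Nat.mod_two_ne_one.mp hpar))
        rw [hco] at this
        omega
      simp [this]
  rw [show 2 * p = 1 + (p - 1) + 1 + (p - 1) by omega]
  unfold uList hatList invWord
  simp only [List.range_add, List.range_one, List.map_append, List.map_cons, List.map_nil,
    List.map_map, List.map_reverse, List.append_assoc, List.cons_append, List.nil_append]
  congr 1
  · simp [epsSign]
  congr 1
  · exact List.map_congr_left fun j _ => by simp [epsSign, Nat.add_comm 1 j]
  rw [hmid, List.singleton_append, ← List.map_reverse, List.range_eq_range', List.reverse_range',
    List.map_map, ← List.range_eq_range']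
  congr 1
  refine List.map_congr_left fun j hj => ?_
  rw [List.mem_range] at hj
  simp only [Function.comp_apply]
  rw [show 1 + (p - 1) + 1 + j = 2 * p - (p - 1 - j) by omega,
    epsSign_two_mul_sub hp hco (by omega) (by omega),
    show 0 + (p - 1) - 1 - j + 1 = p - 1 - j by omega]
  rfl

lemma map_sign_range'_blockStart (hq : 0 < q) (n : ℕ) : ∀ v, v + n = 2 * q →
    (List.range' (blockStart p q v) (2 * p - blockStart p q v)).map (epsSign p q) =
      signList (decide (v % 2 = 0)) ((List.range' v n).map (blockLen p q)) := by
  induction n with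
  | zero =>
    intro v hv
    rw [show v = 2 * q by omega, blockStart_two_mul hq]
    simp [signList]
  | succ n ih =>
    intro v hv
    have hle1 : blockStart p q v ≤ blockStart p q (v + 1) := blockStart_mono (by omega)
    have hle2 : blockStart p q (v + 1) ≤ 2 * p :=
      blockStart_two_mul (p := p) hq ▸ blockStart_mono (by omega)
    rw [show 2 * p - blockStart p q v = blockLen p q v + (2 * p - blockStart p q (v + 1)) by
        unfold blockLen; omega,
      ← List.range'_append_1, show blockStart p q v + blockLen p q v = blockStart p q (v + 1) by
        unfold blockLen; omega,
      List.map_append, List.range'_succ, List.map_cons, signList,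
      ih (v + 1) (by omega)]
    congr 1
    · refine List.eq_replicate_iff.mpr ⟨by simp, fun x hx => ?_⟩
      obtain ⟨i, hi, rfl⟩ := List.mem_map.mp hx
      obtain ⟨hi1, hi2⟩ := List.mem_range'_1.mp hi
      rw [epsSign, div_eq_of_mem_block hq hi1 (by unfold blockLen at hi2; omega)]
    · congr 1
      rcases Nat.mod_two_eq_zero_or_one v with h | h <;> simp [h, Nat.add_mod]

end Signs

section Runs

lemma runsAux_replicate_append (t : Bool) (j k : ℕ) (rest : List Bool) :
    runsAux t k (List.replicate j t ++ rest) = runsAux t (k + j) rest := by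
  induction j generalizing k with
  | zero => rfl
  | succ j ih => simp [List.replicate_succ, runsAux, ih, Nat.add_right_comm, Nat.add_assoc]

lemma runsAux_signList_not (L : List ℕ) (hpos : ∀ x ∈ L, 0 < x) (t : Bool) (n : ℕ) :
    runsAux t n (signList (!t) L) = n :: L := by
  induction L generalizing t n with
  | nil => rfl
  | cons d L ih =>
    obtain ⟨d, rfl⟩ := Nat.exists_eq_add_one.mpr (hpos _ List.mem_cons_self)
    have ih' := ih (fun x hx => hpos x (List.mem_cons_of_mem _ hx)) (!t) (d + 1)
    simp only [Bool.not_not] at ih'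
    simp [signList, List.replicate_succ, runsAux, runsAux_replicate_append, Nat.add_comm 1 d, ih']

lemma Sseq_eq_of_map_snd_eq_signList {w : Word} {s : Bool} {D : List ℕ}
    (hpos : ∀ x ∈ D, 0 < x) (h : w.map Prod.snd = signList s D) : Sseq w = D := by
  rcases D with _ | ⟨d, D⟩
  · simp_all [Sseq, signList]
  obtain ⟨d, rfl⟩ := Nat.exists_eq_add_one.mpr (hpos _ List.mem_cons_self)
  simp only [Sseq, h, signList, List.replicate_succ, List.cons_append]
  rw [runsAux_replicate_append, Nat.add_comm 1 d,
    runsAux_signList_not D (fun x hx => hpos x (List.mem_cons_of_mem _ hx))]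

end Runs

section UList

variable {p q : ℕ}

lemma blockLen_pos (hq : 0 < q) (hqp : q ≤ p) (v : ℕ) : 0 < blockLen p q v := by
  have hlt : q * blockStart p q v < (v + 1) * p := by
    have := Nat.div_mul_le_self (v * p + q - 1) q
    have : (v + 1) * p = v * p + p := by ring
    rw [blockStart, Nat.ceilDiv_eq_add_pred_div, mul_comm]
    omega
  have := (blockStart_le_iff hq (p := p) (v := v + 1) (i := blockStart p q v)).not.mpr (by omega)
  unfold blockLen
  omega

lemma map_snd_uList_eq_signList (hp : 0 < p) (hq : 0 < q) (hco : Nat.Coprime q p) :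
    (uList p q).map Prod.snd = signList true ((List.range (2 * q)).map (blockLen p q)) := by
  have h := map_sign_range'_blockStart (p := p) hq (2 * q) 0 (by omega)
  rw [blockStart_zero, Nat.sub_zero, ← List.range_eq_range', ← List.range_eq_range'] at h
  rw [map_snd_uList hp hco, h]
  rfl

lemma Sseq_uList (hp : 0 < p) (hq : 0 < q) (hqp : q ≤ p) (hco : Nat.Coprime q p) :
    Sseq (uList p q) = (List.range (2 * q)).map (blockLen p q) :=
  Sseq_eq_of_map_snd_eq_signList (by simpa using fun v _ => blockLen_pos hq hqp v)
    (map_snd_uList_eq_signList hp hq hco)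

lemma startsAtBoundary_uList (hp : 0 < p) (hq : 0 < q) (hqp : q ≤ p) (hco : Nat.Coprime q p) :
    StartsAtBoundary (uList p q) := by
  have hlastSign : ((uList p q).map Prod.snd).getLast? = some false := by
    rw [map_snd_uList hp hco, show 2 * p = 2 * p - 1 + 1 by omega, List.range_succ,
      List.map_append, List.map_singleton, List.getLast?_concat, epsSign_two_mul_sub_one hq hqp]
  right
  intro x hx y hy
  rw [List.getLast?_map, hy, Option.map_some, Option.some_inj] at hlastSign
  rw [show x = ((0 : Fin 2), true) from (Option.mem_some_iff.mp hx).symm, hlastSign]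
  simp

end UList

section Decomposition

variable {p q m s : ℕ}

lemma blockLen_add_eq_of_modEq (hq : 0 < q) (hpe : p = m * q + s) {k a : ℕ} (h : k ≡ a [MOD q])
    (u : ℕ) : blockLen p q (k + u) = blockLen p q (a + u) := by
  rw [blockLen_eq hq hpe, blockLen_eq hq hpe, ← ceilIncr_mod hq (k + u),
    ← ceilIncr_mod hq (a + u),
    show (k + u) % q = (a + u) % q from h.add_right u]

lemma map_blockLen_range_two_mul (hq : 0 < q) (hpe : p = m * q + s) {b : ℕ} (hbq : b ≤ q) :
    (List.range (2 * q)).map (blockLen p q) =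
      (List.range' 0 b).map (blockLen p q) ++ (List.range' b (q - b)).map (blockLen p q) ++
        (List.range' 0 b).map (blockLen p q) ++ (List.range' b (q - b)).map (blockLen p q) := by
  have hshift : ∀ a n, (List.range' (q + a) n).map (blockLen p q) =
      (List.range' a n).map (blockLen p q) := fun a n =>
    List.ext_getElem (by simp) fun u _ _ => by
      simp only [List.getElem_map, List.getElem_range', one_mul]
      exact blockLen_add_eq_of_modEq hq hpe (by simp [Nat.ModEq]) u
  rw [List.range_eq_range', show 2 * q = b + (q - b) + (b + (q - b)) by omega]
  simp only [← List.range'_append_1, List.map_append, List.append_assoc]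
  rw [show 0 + (b + (q - b)) = q + 0 by omega, show q + 0 + b = q + b by omega, hshift, hshift,
    Nat.zero_add]

lemma reverse_map_blockLen_range' (hq : 0 < q) (hpe : p = m * q + s) (hsq : s ≤ q) {a n : ℕ}
    (h : (2 * a + n) * s ≡ 1 [MOD q]) :
    ((List.range' a n).map (blockLen p q)).reverse = (List.range' a n).map (blockLen p q) :=
  reverse_map_range'_eq_self fun u hu => by
    rw [blockLen_eq hq hpe, blockLen_eq hq hpe,
      ceilIncr_eq_of_modEq hq hsq
        (by rwa [show a + u + (a + (n - 1 - u)) + 1 = 2 * a + n by omega])]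

lemma cyclicCount_map_blockLen_range' (hq : 0 < q) (hpe : p = m * q + s) {a n : ℕ}
    (hn : n ≤ 2 * q)
    (hocc : ∀ k, (∀ u < n, blockLen p q (k + u) = blockLen p q (a + u)) → k ≡ a [MOD q]) :
    cyclicCount ((List.range' a n).map (blockLen p q)) ((List.range (2 * q)).map (blockLen p q))
      = 2 := by
  have hper : ∀ x, blockLen p q (x % (2 * q)) = blockLen p q x := fun x => by
    simpa using blockLen_add_eq_of_modEq hq hpe (Nat.mod_mod_of_dvd x (dvd_mul_left q 2)) 0
  rw [cyclicCount_map_range' hper hn]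
  convert count_modEq_two_mul hq a using 2
  funext k
  exact propext ⟨hocc k, fun h u _ => blockLen_add_eq_of_modEq hq hpe h u⟩

lemma blockLen_zero (hq : 0 < q) (hpe : p = m * q + s) (hs : 0 < s) (hsq : s ≤ q) :
    blockLen p q 0 = m + 1 := by
  rw [blockLen_eq hq hpe, ceilIncr, zero_add, one_mul, zero_mul, zero_ceilDiv,
    Nat.ceilDiv_eq_one hs hsq, Nat.sub_zero]

lemma blockLen_eq_of_mul_modEq_one (hq : 0 < q) (hpe : p = m * q + s) (hsq : s < q) {b : ℕ}
    (hb : b * s ≡ 1 [MOD q]) : blockLen p q b = m := by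
  have hz : b * s % q = 1 % q := hb
  have hcond : ¬(b * s % q = 0 ∧ 0 < s ∨ q < b * s % q + s) := by
    rcases Nat.lt_or_ge q 2 with hq1 | hq2
    · obtain rfl : q = 1 := by omega
      omega
    · rw [Nat.mod_eq_of_lt hq2] at hz
      omega
  rw [blockLen_eq hq hpe, ceilIncr_eq hq hsq.le, if_neg hcond, add_zero]

lemma exists_mul_modEq_one {q s : ℕ} (hq : 0 < q) (hco : Nat.Coprime s q) :
    ∃ b < q, b * s ≡ 1 [MOD q] := by
  have : NeZero q := ⟨hq.ne'⟩
  refine ⟨((s : ZMod q)⁻¹).val, ZMod.val_lt _, (ZMod.natCast_eq_natCast_iff _ _ _).mp ?_⟩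
  push_cast
  exact ZMod.val_inv_mul hco

lemma exists_isSymmDecomp_uList {p q m s : ℕ} (hq : 0 < q) (hm : 0 < m) (hsq : s < q)
    (hpe : p = m * q + s) (hco : Nat.Coprime q p) :
    ∃ S1 S2 : List ℕ, IsSymmDecomp (uList p q) m S1 S2 ∧ (q = 1 → S1 = []) ∧
      cyclicCount S1 (S1 ++ S2 ++ S1 ++ S2) = 2 ∧ cyclicCount S2 (S1 ++ S2 ++ S1 ++ S2) = 2 := by
  have hqs : Nat.Coprime q s := (Nat.coprime_mul_right_add_right q s m).mp (hpe ▸ hco)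
  obtain ⟨b, hbq, hb⟩ := exists_mul_modEq_one hq hqs.symm
  have hqp : q ≤ p := by nlinarith
  have hp : 0 < p := by omega
  have hsplit := map_blockLen_range_two_mul hq hpe hbq.le
  have hceil : ∀ {k a n : ℕ}, (∀ u < n, blockLen p q (k + u) = blockLen p q (a + u)) →
      ∀ u < n, ceilIncr q s (k + u) = ceilIncr q s (a + u) := fun h u hu => by
    simpa [blockLen_eq hq hpe] using h u hu
  have hb' : (2 * b + (q - b)) * s ≡ 1 [MOD q] := by
    rw [show 2 * b + (q - b) = b + q by omega]
    exact (show (b + q) * s ≡ b * s [MOD q] by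
      rw [Nat.ModEq, add_mul, Nat.add_mul_mod_self_left]).trans hb
  have hpal1 := reverse_map_blockLen_range' (a := 0) hq hpe hsq.le (by simpa using hb)
  have hpal2 := reverse_map_blockLen_range' hq hpe hsq.le hb'
  have hhead1 : ∀ x ∈ ((List.range' 0 b).map (blockLen p q)).head?, x = m + 1 := by
    rcases Nat.eq_zero_or_pos b with rfl | hb0
    · simp
    have hs : 0 < s := Nat.pos_of_ne_zero fun h => by
      rw [h, Nat.coprime_zero_right] at hqs
      omega
    obtain ⟨b, rfl⟩ := Nat.exists_eq_add_one.mpr hb0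
    simp [List.range'_succ, blockLen_zero hq hpe hs hsq.le]
  have hhead2 : ((List.range' b (q - b)).map (blockLen p q)).head? = some m := by
    obtain ⟨n, hn⟩ := Nat.exists_eq_add_one.mpr (Nat.sub_pos_of_lt hbq)
    rw [hn, List.range'_succ, List.map_cons, List.head?_cons,
      blockLen_eq_of_mul_modEq_one hq hpe hsq hb]
  refine ⟨(List.range' 0 b).map (blockLen p q), (List.range' b (q - b)).map (blockLen p q),
    ⟨⟨0, ?_, ?_⟩, hpal1, hpal2, hhead1, ?_, hhead2, ?_⟩, ?_, ?_, ?_⟩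
  · exact (List.rotate_zero _).symm ▸ startsAtBoundary_uList hp hq hqp hco
  · rw [List.rotate_zero, Sseq_uList hp hq hqp hco, hsplit]
  · rwa [← List.head?_reverse, hpal1]
  · rwa [← List.head?_reverse, hpal2]
  · intro hq1
    simp [show b = 0 by omega]
  · rw [← hsplit]
    exact cyclicCount_map_blockLen_range' hq hpe (by omega) fun k hk =>
      modEq_zero_of_forall_ceilIncr_add_eq hq hqs hb (by simpa using hceil hk)
  · rw [← hsplit]
    exact cyclicCount_map_blockLen_range' hq hpe (by omega) fun k hk =>
      modEq_of_forall_ceilIncr_add_eq hq hqs hbq hb (hceil hk)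

end Decomposition

section ContinuedFraction

lemma cf_nonneg_le_one : ∀ l : List ℕ, (∀ x ∈ l, 0 < x) → 0 ≤ cf l ∧ cf l ≤ 1
  | [], _ => by simp [cf]
  | m :: l, h => by
    have hm : (1 : ℚ) ≤ m := by exact_mod_cast h m List.mem_cons_self
    have ih := cf_nonneg_le_one l fun x hx => h x (List.mem_cons_of_mem _ hx)
    rw [cf, one_div]
    exact ⟨inv_nonneg.mpr (by linarith), inv_le_one_of_one_le₀ (by linarith)⟩

lemma cf_lt_one {l : List ℕ} (hl : ∀ x ∈ l, 0 < x)
    (hlast : l ≠ [] → ∀ x ∈ l.getLast?, 2 ≤ x) :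
    cf l < 1 := by
  rcases l with _ | ⟨m, l⟩
  · simp [cf]
  have hm : (1 : ℚ) ≤ m := by exact_mod_cast hl m List.mem_cons_self
  have hl' : ∀ x ∈ l, 0 < x := fun x hx => hl x (List.mem_cons_of_mem _ hx)
  have hgt : 1 < (m : ℚ) + cf l := by
    rcases l with _ | ⟨m', l⟩
    · have : (2 : ℚ) ≤ m := by exact_mod_cast hlast (List.cons_ne_nil _ _) m rfl
      simp only [cf]
      linarith
    · have := (cf_nonneg_le_one l fun x hx => hl' x (List.mem_cons_of_mem _ hx)).1
      have hm' : (1 : ℚ) ≤ m' := by exact_mod_cast hl' m' List.mem_cons_self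
      have : 0 < cf (m' :: l) := by rw [cf]; positivity
      linarith
  rw [cf, one_div]
  exact inv_lt_one_of_one_lt₀ hgt

/-- Writing `1 / (m + x) = q / p` in lowest terms, `p / q = m + x` gives `p = m q + q x`
with `0 ≤ q x < q`. -/
lemma exists_den_eq_mul_num_add {m : ℕ} {x : ℚ} (hm : 0 < m) (hx0 : 0 ≤ x) (hx1 : x < 1) :
    ∃ s < (1 / (m + x)).num.toNat, (1 / (m + x)).den = m * (1 / (m + x)).num.toNat + s := by
  set r := 1 / ((m : ℚ) + x)
  have hmx : 0 < (m : ℚ) + x := by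
    have : (1 : ℚ) ≤ m := by exact_mod_cast hm
    linarith
  have hnum : 0 < r.num := Rat.num_pos.mpr (by positivity)
  have hq : ((r.num.toNat : ℕ) : ℚ) = r.num := by exact_mod_cast Int.toNat_of_nonneg hnum.le
  have hden : (r.den : ℚ) = r.num.toNat * (m + x) := by
    have h := Rat.num_div_den r
    rw [div_eq_div_iff (by positivity) hmx.ne', ← hq] at h
    linarith
  have hlo : m * r.num.toNat ≤ r.den := by
    have : (m : ℚ) * r.num.toNat ≤ r.den := by rw [hden]; nlinarith
    exact_mod_cast this
  have hhi : r.den < m * r.num.toNat + r.num.toNat := by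
    have : (r.den : ℚ) < m * r.num.toNat + r.num.toNat := by
      rw [hden]; nlinarith [show (0 : ℚ) < r.num.toNat by rw [hq]; exact_mod_cast hnum]
    exact_mod_cast this
  exact ⟨r.den - m * r.num.toNat, by omega, by omega⟩

end ContinuedFraction

/-- The cyclic S-sequence `CS(r)` decomposes as `⟨⟨S₁, S₂, S₁, S₂⟩⟩` with each `Sᵢ`
a palindrome occurring exactly twice, `S₁` beginning and ending with `m₁+1`
(empty when `k = 1`), and `S₂` beginning and ending with `m₁`. -/
theorem CS_symmetric_decomposition (m1 : ℕ) (ms : List ℕ) (hm1 : 0 < m1)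
    (hms : ∀ x ∈ ms, 0 < x) (hlast : ms ≠ [] → ∀ x ∈ ms.getLast?, 2 ≤ x) :
    ∃ S1 S2 : List ℕ,
      IsSymmDecomp (slopeWord (cf (m1 :: ms))) m1 S1 S2 ∧
      (ms = [] → S1 = []) ∧
      (S1 ≠ [] → cyclicCount S1 (S1 ++ S2 ++ S1 ++ S2) = 2) ∧
      cyclicCount S2 (S1 ++ S2 ++ S1 ++ S2) = 2 := by
  obtain ⟨s, hsq, hpe⟩ := exists_den_eq_mul_num_add hm1 (cf_nonneg_le_one ms hms).1
    (cf_lt_one hms hlast)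
  rw [show 1 / ((m1 : ℚ) + cf ms) = cf (m1 :: ms) from rfl] at hsq hpe
  have hco : Nat.Coprime (cf (m1 :: ms)).num.toNat (cf (m1 :: ms)).den := by
    have := (cf (m1 :: ms)).reduced
    rwa [show (cf (m1 :: ms)).num.natAbs = (cf (m1 :: ms)).num.toNat by omega] at this
  obtain ⟨S1, S2, hdec, hS1, hc1, hc2⟩ := exists_isSymmDecomp_uList (by omega) hm1 hsq hpe hco
  refine ⟨S1, S2, hdec, fun hnil => hS1 ?_, fun _ => hc1, hc2⟩
  simp [hnil, cf, Rat.inv_natCast_num_of_pos hm1]
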